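/- Let W be a single-basin potential on the path graph on ℓ vertices and H = L + diag(W). Then the spectral gap γ_H of H satisfies γ_H ≥ 1/(ℓ(ℓ−1)), a bound independent of W. -/

import Mathlib

open Matrix

noncomputable instance (n : ℕ) : DecidableRel (SimpleGraph.pathGraph n).Adj :=
  Classical.decRel _

noncomputable def hamiltonian {V : Type*} [Fintype V] [DecidableEq V]
    (G : SimpleGraph V) [DecidableRel G.Adj] (W : V → ℝ) : Matrix V V ℝ :=
  G.lapMatrix ℝ + Matrix.diagonal W

lemma hamiltonian_isHermitian {V : Type*} [Fintype V] [DecidableEq V]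
    (G : SimpleGraph V) [DecidableRel G.Adj] (W : V → ℝ) :
    (hamiltonian G W).IsHermitian :=
  (SimpleGraph.posSemidef_lapMatrix ℝ G).isHermitian.add (Matrix.isHermitian_diagonal W)

noncomputable def sortedEigenvalues {n : Type*} [Fintype n] [DecidableEq n]
    {A : Matrix n n ℝ} (hA : A.IsHermitian) : Fin (Fintype.card n) → ℝ :=
  fun i =>
    let f : Fin (Fintype.card n) → ℝ := hA.eigenvalues ∘ (Fintype.equivFin n).symm
    f (Tuple.sort f i)

/-- Gap between the two smallest eigenvalues, counted with multiplicity. -/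
noncomputable def specGap {n : Type*} [Fintype n] [DecidableEq n]
    {A : Matrix n n ℝ} (hA : A.IsHermitian) : ℝ :=
  if h : 2 ≤ Fintype.card n then
    sortedEigenvalues hA ⟨1, by omega⟩ - sortedEigenvalues hA ⟨0, by omega⟩
  else 0

def ConnInG {V : Type*} (G : SimpleGraph V) (S : Set V) : Prop :=
  (G.induce S).Preconnected

def SingleBasin {V : Type*} (G : SimpleGraph V) (W : V → ℝ) : Prop :=
  ∀ E : ℝ, ConnInG G {x | W x < E}

/-! By min–max it suffices to show `(λ₀ + 1/(ℓ(ℓ-1))) |f|² ≤ ⟪f, H f⟫` for every `f` orthogonal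
to a ground state `ψ`. Since `|u|` never has more energy than `u`, `ψ` can be taken nonnegative,
hence positive on the connected path. The single-basin condition makes `ψ` unimodal: an interior
dip of `ψ` sits at a point `b` with `W b > λ₀` between two local maxima of `ψ` where `W ≤ λ₀`, so
the sublevel set `{W < W b}` would not be an interval. Writing `f = g ψ`, the energy of `f` above
`λ₀` is the Dirichlet form of `g` with edge weights `ψ k ψ (k+1)`, and the variance of `g` under
`ψ²` is at most `ℓ(ℓ-1)` times it by canonical paths: unimodality gives
`ψ x² ψ y² ≤ ψ k ψ (k+1) (ψ x² + ψ y²)` on every edge `k` between `x` and `y`. -/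

lemma Finset.exists_last_isMinOn {α β : Type*} [LinearOrder α] [LinearOrder β] (f : α → β)
    {s : Finset α} (hs : s.Nonempty) :
    ∃ b ∈ s, (∀ k ∈ s, f b ≤ f k) ∧ ∀ k ∈ s, b < k → f b < f k := by
  obtain ⟨a, ha, hmin⟩ := s.exists_min_image f hs
  have hT : (s.filter (f · ≤ f a)).Nonempty := ⟨a, Finset.mem_filter.mpr ⟨ha, le_rfl⟩⟩
  obtain ⟨hb, hba⟩ := Finset.mem_filter.mp ((s.filter (f · ≤ f a)).max'_mem hT)
  refine ⟨_, hb, fun k hk => hba.trans (hmin k hk), fun k hk hbk => ?_⟩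
  by_contra! hkb
  exact (Finset.le_max' _ k (Finset.mem_filter.mpr ⟨hk, hkb.trans hba⟩)).not_gt hbk

lemma Finset.sum_sum_mul_mul_sub_sq {ι : Type*} (s : Finset ι) (π g : ι → ℝ) :
    ∑ x ∈ s, ∑ y ∈ s, π x * π y * (g x - g y) ^ 2 =
      2 * ((∑ x ∈ s, π x) * ∑ x ∈ s, π x * g x ^ 2 - (∑ x ∈ s, π x * g x) ^ 2) := by
  have h : ∀ x y, π x * π y * (g x - g y) ^ 2 =
      π x * g x ^ 2 * π y + π x * (π y * g y ^ 2) - 2 * (π x * g x) * (π y * g y) :=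
    fun x y => by ring
  simp only [h, Finset.sum_add_distrib, Finset.sum_sub_distrib, ← Finset.mul_sum,
    ← Finset.sum_mul]
  ring

lemma sq_sub_le_mul_sum_Ico_sq_sub (g : ℕ → ℝ) {x y : ℕ} (hxy : x ≤ y) :
    (g y - g x) ^ 2 ≤ (y - x : ℕ) * ∑ k ∈ Finset.Ico x y, (g (k + 1) - g k) ^ 2 := by
  rw [← Finset.sum_Ico_sub g hxy, ← Nat.card_Ico]
  exact sq_sum_le_card_mul_sum_sq

lemma sq_mul_sq_le_mul_mul_add_sq {a b c d : ℝ} (ha : 0 ≤ a) (hb : 0 ≤ b)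
    (hc : min a b ≤ c) (hd : min a b ≤ d) : a ^ 2 * b ^ 2 ≤ c * d * (a ^ 2 + b ^ 2) := by
  have hcd : min a b ^ 2 ≤ c * d := by
    rw [sq]; exact mul_le_mul hc hd (le_min ha hb) ((le_min ha hb).trans hc)
  rcases le_total a b with hab | hab
  · rw [min_eq_left hab] at hcd
    nlinarith [sq_nonneg a, sq_nonneg b]
  · rw [min_eq_right hab] at hcd
    nlinarith [sq_nonneg a, sq_nonneg b]

lemma Matrix.exists_ne_zero_dotProduct_eq_zero {n : Type*} [Fintype n] (u₀ u₁ ψ : n → ℝ) :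
    ∃ a b : ℝ, (a, b) ≠ 0 ∧ (a • u₀ + b • u₁) ⬝ᵥ ψ = 0 := by
  by_cases h₀ : u₀ ⬝ᵥ ψ = 0
  · exact ⟨1, 0, by simp, by simp [h₀]⟩
  · refine ⟨u₁ ⬝ᵥ ψ, -(u₀ ⬝ᵥ ψ), by simp [h₀], ?_⟩
    simp only [add_dotProduct, smul_dotProduct, smul_eq_mul]
    ring

namespace Matrix.IsHermitian

variable {n : Type*} [Fintype n] [DecidableEq n] {A : Matrix n n ℝ} (hA : A.IsHermitian)

lemma exists_equiv_sortedEigenvalues_eq :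
    ∃ ι : Fin (Fintype.card n) ≃ n, sortedEigenvalues hA = hA.eigenvalues ∘ ι :=
  ⟨(Tuple.sort _).trans (Fintype.equivFin n).symm, rfl⟩

lemma monotone_sortedEigenvalues : Monotone (sortedEigenvalues hA) :=
  Tuple.monotone_sort (hA.eigenvalues ∘ (Fintype.equivFin n).symm)

lemma sortedEigenvalues_zero_le (h : 0 < Fintype.card n) (i : n) :
    sortedEigenvalues hA ⟨0, h⟩ ≤ hA.eigenvalues i := by
  obtain ⟨ι, hι⟩ := exists_equiv_sortedEigenvalues_eq hA
  have := monotone_sortedEigenvalues hA (show (⟨0, h⟩ : Fin _) ≤ ι.symm i from Nat.zero_le _)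
  simpa [hι] using this

lemma posSemidef_sub_smul_one_of_le {c : ℝ} (hc : ∀ i, c ≤ hA.eigenvalues i) :
    (A - c • 1).PosSemidef := by
  have hB : (A - c • 1).IsHermitian := hA.sub (isHermitian_one.smul (IsSelfAdjoint.all c))
  rw [hB.posSemidef_iff_eigenvalues_nonneg]
  intro i
  have h : hB.eigenvalues i ∈ spectrum ℝ (A - algebraMap ℝ _ c) := by
    rw [Algebra.algebraMap_eq_smul_one]; exact hB.eigenvalues_mem_spectrum_real i
  rw [← spectrum.sub_singleton_eq, hA.spectrum_real_eq_range_eigenvalues] at h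
  obtain ⟨_, ⟨j, rfl⟩, _, rfl, hj⟩ := h
  exact hj ▸ sub_nonneg.mpr (hc j)

variable {hA} in
lemma mul_dotProduct_le_of_le_eigenvalues {c : ℝ} (hc : ∀ i, c ≤ hA.eigenvalues i) (v : n → ℝ) :
    c * (v ⬝ᵥ v) ≤ v ⬝ᵥ (A *ᵥ v) := by
  have := (hA.posSemidef_sub_smul_one_of_le hc).dotProduct_mulVec_nonneg v
  simp only [star_trivial, sub_mulVec, smul_mulVec, one_mulVec, dotProduct_sub,
    dotProduct_smul, smul_eq_mul] at this
  linarith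

variable {hA} in
lemma mulVec_eq_smul_of_dotProduct_eq {c : ℝ} (hc : ∀ i, c ≤ hA.eigenvalues i) {v : n → ℝ}
    (hv : v ⬝ᵥ (A *ᵥ v) = c * (v ⬝ᵥ v)) : A *ᵥ v = c • v := by
  have := ((hA.posSemidef_sub_smul_one_of_le hc).dotProduct_mulVec_zero_iff v).mp (by
    simp only [star_trivial, sub_mulVec, smul_mulVec, one_mulVec, dotProduct_sub,
      dotProduct_smul, smul_eq_mul, hv, sub_self])
  rwa [sub_mulVec, smul_mulVec, one_mulVec, sub_eq_zero] at this

lemma dotProduct_eigenvectorBasis (i j : n) :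
    ⇑(hA.eigenvectorBasis i) ⬝ᵥ ⇑(hA.eigenvectorBasis j) = if i = j then 1 else 0 := by
  rw [← orthonormal_iff_ite.mp hA.eigenvectorBasis.orthonormal i j,
    EuclideanSpace.inner_eq_star_dotProduct, dotProduct_comm]
  rfl

lemma exists_nonneg_unit_eigenvector (h : 0 < Fintype.card n)
    (habs : ∀ u : n → ℝ, |u| ⬝ᵥ (A *ᵥ |u|) ≤ u ⬝ᵥ (A *ᵥ u)) :
    ∃ ψ : n → ℝ, 0 ≤ ψ ∧ ψ ⬝ᵥ ψ = 1 ∧ A *ᵥ ψ = sortedEigenvalues hA ⟨0, h⟩ • ψ := by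
  obtain ⟨ι, hι⟩ := exists_equiv_sortedEigenvalues_eq hA
  set μ := sortedEigenvalues hA ⟨0, h⟩
  set u : n → ℝ := ⇑(hA.eigenvectorBasis (ι ⟨0, h⟩))
  have hu : u ⬝ᵥ u = 1 := by simp [u, dotProduct_eigenvectorBasis]
  have hAu : A *ᵥ u = μ • u := by
    simp [u, μ, hι, mulVec_eigenvectorBasis]
  have habs_norm : |u| ⬝ᵥ |u| = 1 := by
    simpa [dotProduct, abs_mul_abs_self] using hu
  refine ⟨|u|, abs_nonneg u, habs_norm, mulVec_eq_smul_of_dotProduct_eq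
    (sortedEigenvalues_zero_le hA h) (le_antisymm ?_ ?_)⟩
  · simpa [hAu, hu, habs_norm] using habs u
  · exact mul_dotProduct_le_of_le_eigenvalues (sortedEigenvalues_zero_le hA h) |u|

/-- Two orthonormal eigenvectors for the two smallest eigenvalues span a plane containing a vector
orthogonal to `ψ`, whose Rayleigh quotient is at most the second eigenvalue. -/
lemma le_specGap_of_forall_dotProduct_eq_zero (hn : 2 ≤ Fintype.card n) (ψ : n → ℝ) {c : ℝ}
    (hψ : ∀ f : n → ℝ, f ⬝ᵥ ψ = 0 →
      (sortedEigenvalues hA ⟨0, by omega⟩ + c) * (f ⬝ᵥ f) ≤ f ⬝ᵥ (A *ᵥ f)) :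
    c ≤ specGap hA := by
  obtain ⟨ι, hι⟩ := exists_equiv_sortedEigenvalues_eq hA
  set μ₀ := sortedEigenvalues hA ⟨0, by omega⟩
  set μ₁ := sortedEigenvalues hA ⟨1, by omega⟩
  have hμ : μ₀ ≤ μ₁ := monotone_sortedEigenvalues hA (show (⟨0, _⟩ : Fin _) ≤ ⟨1, _⟩ by simp)
  have hgap : specGap hA = μ₁ - μ₀ := dif_pos hn
  set u₀ : n → ℝ := ⇑(hA.eigenvectorBasis (ι ⟨0, by omega⟩))
  set u₁ : n → ℝ := ⇑(hA.eigenvectorBasis (ι ⟨1, by omega⟩))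
  obtain ⟨a, b, hab, hf⟩ := exists_ne_zero_dotProduct_eq_zero u₀ u₁ ψ
  have hdot : ∀ i j, hA.eigenvectorBasis (ι i) ⬝ᵥ hA.eigenvectorBasis (ι j) =
      if i = j then 1 else 0 := fun i j => by simp [dotProduct_eigenvectorBasis]
  have hnorm : (a • u₀ + b • u₁) ⬝ᵥ (a • u₀ + b • u₁) = a ^ 2 + b ^ 2 := by
    simp only [u₀, u₁, add_dotProduct, dotProduct_add, smul_dotProduct, dotProduct_smul, hdot,
      Fin.mk.injEq, zero_ne_one, one_ne_zero, if_true, if_false, smul_eq_mul]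
    ring
  have henergy : (a • u₀ + b • u₁) ⬝ᵥ (A *ᵥ (a • u₀ + b • u₁)) = a ^ 2 * μ₀ + b ^ 2 * μ₁ := by
    simp only [u₀, u₁, mulVec_add, mulVec_smul, mulVec_eigenvectorBasis, add_dotProduct,
      dotProduct_add, smul_dotProduct, dotProduct_smul, hdot, Fin.mk.injEq, zero_ne_one,
      one_ne_zero, if_true, if_false, smul_eq_mul, μ₀, μ₁, hι, Function.comp_apply]
    ring
  have hpos : 0 < a ^ 2 + b ^ 2 := by
    rcases eq_or_ne a 0 with rfl | ha
    · have hb : b ≠ 0 := by simpa using hab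
      positivity
    · positivity
  have := hψ _ hf
  rw [hnorm, henergy] at this
  rw [hgap]
  nlinarith

end Matrix.IsHermitian

namespace SimpleGraph

variable {V : Type*} [Fintype V] (G : SimpleGraph V) [DecidableRel G.Adj]

lemma sum_sum_adj_comm (F : V → V → ℝ) :
    ∑ i, ∑ j, (if G.Adj i j then F i j else 0) = ∑ i, ∑ j, (if G.Adj i j then F j i else 0) := by
  rw [Finset.sum_comm]
  simp only [G.adj_comm]

variable [DecidableEq V]

lemma lapMatrix_mulVec_apply_eq_sum (y : V → ℝ) (i : V) :
    (G.lapMatrix ℝ *ᵥ y) i = ∑ j ∈ G.neighborFinset i, (y i - y j) := by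
  rw [lapMatrix_mulVec_apply, Finset.sum_sub_distrib, Finset.sum_const,
    card_neighborFinset_eq_degree, nsmul_eq_mul]

lemma dotProduct_lapMatrix_mulVec (x y : V → ℝ) :
    x ⬝ᵥ (G.lapMatrix ℝ *ᵥ y) =
      (∑ i, ∑ j, if G.Adj i j then (x i - x j) * (y i - y j) else 0) / 2 := by
  have h : x ⬝ᵥ (G.lapMatrix ℝ *ᵥ y) = ∑ i, ∑ j, if G.Adj i j then x i * (y i - y j) else 0 := by
    simp only [dotProduct, lapMatrix_mulVec_apply_eq_sum, Finset.mul_sum, neighborFinset_eq_filter,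
      Finset.sum_filter, mul_ite, mul_zero]
  rw [h, eq_div_iff two_ne_zero, mul_two]
  nth_rewrite 2 [sum_sum_adj_comm G]
  rw [← Finset.sum_add_distrib]
  refine Finset.sum_congr rfl fun i _ => ?_
  rw [← Finset.sum_add_distrib]
  refine Finset.sum_congr rfl fun j _ => ?_
  split_ifs <;> ring

lemma ordConnected_of_preconnected_induce_pathGraph {ℓ : ℕ} {S : Set (Fin ℓ)}
    (hS : ((pathGraph ℓ).induce S).Preconnected) : S.OrdConnected := by
  refine Set.ordConnected_def.mpr fun x hx y hy z ⟨hxz, hzy⟩ => ?_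
  by_contra hz
  have hwalk : ∀ {u v : S}, ((pathGraph ℓ).induce S).Walk u v → u.1 < z → v.1 < z := by
    intro u v w
    induction w with
    | nil => exact id
    | @cons a b _ hadj _ ih =>
      refine fun hu => ih ?_
      have hb : b.1 ≠ z := fun h => hz (h ▸ b.2)
      have := pathGraph_adj.mp (show (pathGraph ℓ).Adj a.1 b.1 from hadj)
      rw [Fin.lt_def] at hu ⊢
      rw [Ne, Fin.ext_iff] at hb
      omega
  obtain ⟨w⟩ := hS ⟨x, hx⟩ ⟨y, hy⟩
  have hxz' : x < z := lt_of_le_of_ne hxz fun h => hz (h ▸ hx)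
  exact (hwalk w hxz').not_ge hzy

lemma sum_sum_pathGraph_adj {ℓ : ℕ} (F : ℕ → ℕ → ℝ) (hF : ∀ a b, F a b = F b a) :
    ∑ i : Fin ℓ, ∑ j : Fin ℓ, (if (pathGraph ℓ).Adj i j then F i j else 0) =
      2 * ∑ k ∈ Finset.range (ℓ - 1), F k (k + 1) := by
  have hsplit : ∀ i j : Fin ℓ, (if (pathGraph ℓ).Adj i j then F i j else 0) =
      (if (i : ℕ) + 1 = j then F i j else 0) + (if (j : ℕ) + 1 = i then F j i else 0) := by
    intro i j
    simp only [pathGraph_adj]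
    split_ifs <;> first | omega | simp [hF]
  have hright : ∀ i : Fin ℓ, ∑ j : Fin ℓ, (if (i : ℕ) + 1 = j then F i j else 0) =
      if (i : ℕ) + 1 < ℓ then F i (i + 1) else 0 := by
    intro i
    rw [Fin.sum_univ_eq_sum_range (fun j => if (i : ℕ) + 1 = j then F i j else 0),
      Finset.sum_ite_eq]
    simp only [Finset.mem_range]
  have hrange : (Finset.range ℓ).filter (· + 1 < ℓ) = Finset.range (ℓ - 1) := by
    ext k
    simp only [Finset.mem_filter, Finset.mem_range]
    omega
  simp only [hsplit, Finset.sum_add_distrib]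
  rw [Finset.sum_comm (f := fun i j : Fin ℓ => if (j : ℕ) + 1 = i then F j i else 0)]
  simp only [hright, Fin.sum_univ_eq_sum_range (fun k => if k + 1 < ℓ then F k (k + 1) else 0),
    ← Finset.sum_filter, hrange]
  ring

end SimpleGraph

section Hamiltonian

variable {V : Type*} [Fintype V] [DecidableEq V] {G : SimpleGraph V} [DecidableRel G.Adj]
  {W : V → ℝ}

lemma hamiltonian_mulVec_apply (y : V → ℝ) (i : V) :
    (hamiltonian G W *ᵥ y) i = ∑ j ∈ G.neighborFinset i, (y i - y j) + W i * y i := by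
  rw [hamiltonian, add_mulVec, Pi.add_apply, G.lapMatrix_mulVec_apply_eq_sum, mulVec_diagonal]

lemma dotProduct_hamiltonian_mulVec (x y : V → ℝ) :
    x ⬝ᵥ (hamiltonian G W *ᵥ y) = x ⬝ᵥ (G.lapMatrix ℝ *ᵥ y) + ∑ i, W i * x i * y i := by
  rw [hamiltonian, add_mulVec, dotProduct_add]
  congr 1
  simp only [dotProduct, mulVec_diagonal]
  exact Finset.sum_congr rfl fun i _ => by ring

lemma abs_dotProduct_hamiltonian_mulVec_abs_le (u : V → ℝ) :
    |u| ⬝ᵥ (hamiltonian G W *ᵥ |u|) ≤ u ⬝ᵥ (hamiltonian G W *ᵥ u) := by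
  simp only [dotProduct_hamiltonian_mulVec, G.dotProduct_lapMatrix_mulVec, Pi.abs_apply,
    mul_assoc, abs_mul_abs_self]
  gcongr with i _ j _
  split_ifs
  · rw [← sq, ← sq]
    exact sq_le_sq.mpr (abs_abs_sub_abs_le_abs_sub _ _)
  · rfl

lemma dotProduct_hamiltonian_mulVec_mul_eigenvector {ψ : V → ℝ} {μ : ℝ}
    (hψ : hamiltonian G W *ᵥ ψ = μ • ψ) (g : V → ℝ) :
    (g * ψ) ⬝ᵥ (hamiltonian G W *ᵥ (g * ψ)) = μ * ((g * ψ) ⬝ᵥ (g * ψ)) +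
      (∑ i, ∑ j, if G.Adj i j then ψ i * ψ j * (g i - g j) ^ 2 else 0) / 2 := by
  have hμ : μ * ((g * ψ) ⬝ᵥ (g * ψ)) = (g * g * ψ) ⬝ᵥ (hamiltonian G W *ᵥ ψ) := by
    rw [hψ, dotProduct_smul, smul_eq_mul]
    simp only [dotProduct, Pi.mul_apply]
    congr 1
    exact Finset.sum_congr rfl fun i _ => by ring
  rw [hμ, dotProduct_hamiltonian_mulVec, dotProduct_hamiltonian_mulVec,
    G.dotProduct_lapMatrix_mulVec, G.dotProduct_lapMatrix_mulVec]
  have hW : ∑ i, W i * (g * ψ) i * (g * ψ) i = ∑ i, W i * (g * g * ψ) i * ψ i :=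
    Finset.sum_congr rfl fun i _ => by simp only [Pi.mul_apply]; ring
  have hL : (∑ i, ∑ j, if G.Adj i j then ((g * ψ) i - (g * ψ) j) * ((g * ψ) i - (g * ψ) j) else 0) =
      (∑ i, ∑ j, if G.Adj i j then ((g * g * ψ) i - (g * g * ψ) j) * (ψ i - ψ j) else 0) +
      ∑ i, ∑ j, if G.Adj i j then ψ i * ψ j * (g i - g j) ^ 2 else 0 := by
    rw [← Finset.sum_add_distrib]
    refine Finset.sum_congr rfl fun i _ => ?_
    rw [← Finset.sum_add_distrib]
    refine Finset.sum_congr rfl fun j _ => ?_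
    split_ifs
    · simp only [Pi.mul_apply]; ring
    · simp
  rw [hW, hL]
  ring

variable {ψ : V → ℝ} {μ : ℝ}

lemma eq_zero_of_adj_of_eq_zero (hψ₀ : 0 ≤ ψ) (hψ : hamiltonian G W *ᵥ ψ = μ • ψ) {a b : V}
    (hab : G.Adj a b) (ha : ψ a = 0) : ψ b = 0 := by
  have h := congrFun hψ a
  simp only [hamiltonian_mulVec_apply, ha, zero_sub, Finset.sum_neg_distrib, mul_zero, add_zero,
    Pi.smul_apply, smul_eq_mul, neg_eq_zero] at h
  exact (Finset.sum_eq_zero_iff_of_nonneg fun j _ => hψ₀ j).mp h b (G.mem_neighborFinset a b |>.mpr hab)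

lemma pos_of_mulVec_eq_smul (hG : G.Preconnected) (hψ₀ : 0 ≤ ψ) (hψ_ne : ψ ≠ 0)
    (hψ : hamiltonian G W *ᵥ ψ = μ • ψ) (i : V) : 0 < ψ i := by
  refine (hψ₀ i).lt_of_ne' fun hi => hψ_ne (funext fun j => ?_)
  obtain ⟨w⟩ := hG i j
  induction w with
  | nil => exact hi
  | cons hadj _ ih => exact ih (eq_zero_of_adj_of_eq_zero hψ₀ hψ hadj hi)

lemma le_of_forall_adj_le (hψ : hamiltonian G W *ᵥ ψ = μ • ψ) {p : V} (hp : 0 < ψ p)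
    (hmax : ∀ j, G.Adj p j → ψ j ≤ ψ p) : W p ≤ μ := by
  have h := congrFun hψ p
  rw [hamiltonian_mulVec_apply, Pi.smul_apply, smul_eq_mul] at h
  have hsum : 0 ≤ ∑ j ∈ G.neighborFinset p, (ψ p - ψ j) :=
    Finset.sum_nonneg fun j hj => sub_nonneg.mpr (hmax j ((G.mem_neighborFinset p j).mp hj))
  exact le_of_mul_le_mul_right (by linarith) hp

lemma lt_of_forall_adj_ge (hψ : hamiltonian G W *ᵥ ψ = μ • ψ) {b c : V} (hb : 0 < ψ b)
    (hmin : ∀ j, G.Adj b j → ψ b ≤ ψ j) (hbc : G.Adj b c) (hlt : ψ b < ψ c) : μ < W b := by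
  have h := congrFun hψ b
  rw [hamiltonian_mulVec_apply, Pi.smul_apply, smul_eq_mul] at h
  have hsum : ∑ j ∈ G.neighborFinset b, (ψ b - ψ j) < ∑ j ∈ G.neighborFinset b, 0 :=
    Finset.sum_lt_sum (fun j hj => sub_nonpos.mpr (hmin j ((G.mem_neighborFinset b j).mp hj)))
      ⟨c, (G.mem_neighborFinset b c).mpr hbc, sub_neg.mpr hlt⟩
  rw [Finset.sum_const_zero] at hsum
  exact lt_of_mul_lt_mul_right (by linarith) hb.le

end Hamiltonian

def pathDirichletForm (ℓ : ℕ) (Ψ g : ℕ → ℝ) : ℝ :=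
  ∑ k ∈ Finset.range (ℓ - 1), Ψ k * Ψ (k + 1) * (g (k + 1) - g k) ^ 2

lemma sq_mul_sq_mul_sq_sub_le_pathDirichletForm {ℓ : ℕ} {Ψ : ℕ → ℝ} (hΨ : ∀ k, 0 ≤ Ψ k)
    (huni : ∀ x j y, x ≤ j → j ≤ y → y < ℓ → min (Ψ x) (Ψ y) ≤ Ψ j) (g : ℕ → ℝ) {x y : ℕ}
    (hxy : x ≤ y) (hy : y < ℓ) :
    Ψ x ^ 2 * Ψ y ^ 2 * (g y - g x) ^ 2 ≤
      ((ℓ : ℝ) - 1) * (Ψ x ^ 2 + Ψ y ^ 2) * pathDirichletForm ℓ Ψ g := by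
  have hlen : ((y - x : ℕ) : ℝ) ≤ (ℓ : ℝ) - 1 := by
    have : ((y - x : ℕ) : ℝ) + 1 ≤ ℓ := by exact_mod_cast (by omega : y - x + 1 ≤ ℓ)
    linarith
  calc Ψ x ^ 2 * Ψ y ^ 2 * (g y - g x) ^ 2
      ≤ Ψ x ^ 2 * Ψ y ^ 2 * (((ℓ : ℝ) - 1) * ∑ k ∈ Finset.Ico x y, (g (k + 1) - g k) ^ 2) := by
        gcongr
        exact (sq_sub_le_mul_sum_Ico_sq_sub g hxy).trans
          (mul_le_mul_of_nonneg_right hlen (Finset.sum_nonneg fun _ _ => sq_nonneg _))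
    _ = ((ℓ : ℝ) - 1) * ∑ k ∈ Finset.Ico x y, Ψ x ^ 2 * Ψ y ^ 2 * (g (k + 1) - g k) ^ 2 := by
        rw [Finset.mul_sum, Finset.mul_sum, Finset.mul_sum]
        exact Finset.sum_congr rfl fun _ _ => by ring
    _ ≤ ((ℓ : ℝ) - 1) * ∑ k ∈ Finset.Ico x y,
          (Ψ x ^ 2 + Ψ y ^ 2) * (Ψ k * Ψ (k + 1) * (g (k + 1) - g k) ^ 2) := by
        have : (0 : ℝ) ≤ (ℓ : ℝ) - 1 := (Nat.cast_nonneg _).trans hlen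
        refine mul_le_mul_of_nonneg_left (Finset.sum_le_sum fun k hk => ?_) this
        rw [Finset.mem_Ico] at hk
        have := sq_mul_sq_le_mul_mul_add_sq (hΨ x) (hΨ y) (huni x k y hk.1 hk.2.le hy)
          (huni x (k + 1) y (by omega) hk.2 hy)
        exact (mul_le_mul_of_nonneg_right this (sq_nonneg _)).trans_eq (by ring)
    _ ≤ ((ℓ : ℝ) - 1) * ∑ k ∈ Finset.range (ℓ - 1),
          (Ψ x ^ 2 + Ψ y ^ 2) * (Ψ k * Ψ (k + 1) * (g (k + 1) - g k) ^ 2) := by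
        have : (0 : ℝ) ≤ (ℓ : ℝ) - 1 := (Nat.cast_nonneg _).trans hlen
        gcongr
        · exact fun k _ _ => mul_nonneg (by positivity)
            (mul_nonneg (mul_nonneg (hΨ k) (hΨ (k + 1))) (sq_nonneg _))
        · intro k hk
          simp only [Finset.mem_Ico, Finset.mem_range] at hk ⊢
          omega
    _ = ((ℓ : ℝ) - 1) * (Ψ x ^ 2 + Ψ y ^ 2) * pathDirichletForm ℓ Ψ g := by
        rw [pathDirichletForm, Finset.mul_sum, Finset.mul_sum]
        exact Finset.sum_congr rfl fun _ _ => by ring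

lemma sum_sq_mul_sq_le_pathDirichletForm {ℓ : ℕ} {Ψ g : ℕ → ℝ} (hΨ : ∀ k, 0 ≤ Ψ k)
    (huni : ∀ x j y, x ≤ j → j ≤ y → y < ℓ → min (Ψ x) (Ψ y) ≤ Ψ j)
    (hnorm : ∑ k ∈ Finset.range ℓ, Ψ k ^ 2 = 1) (hmean : ∑ k ∈ Finset.range ℓ, Ψ k ^ 2 * g k = 0) :
    ∑ k ∈ Finset.range ℓ, Ψ k ^ 2 * g k ^ 2 ≤
      (ℓ : ℝ) * ((ℓ : ℝ) - 1) * pathDirichletForm ℓ Ψ g := by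
  set D := pathDirichletForm ℓ Ψ g
  have hpair : ∀ x ∈ Finset.range ℓ, ∀ y ∈ Finset.range ℓ,
      Ψ x ^ 2 * Ψ y ^ 2 * (g x - g y) ^ 2 ≤ ((ℓ : ℝ) - 1) * D * (Ψ x ^ 2 + Ψ y ^ 2) := by
    intro x hx y hy
    rw [Finset.mem_range] at hx hy
    rcases le_total x y with h | h
    · have := sq_mul_sq_mul_sq_sub_le_pathDirichletForm hΨ huni g h hy
      rw [← neg_sub, neg_sq]
      linarith
    · have := sq_mul_sq_mul_sq_sub_le_pathDirichletForm hΨ huni g h hx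
      linarith
  have hvar := Finset.sum_sum_mul_mul_sub_sq (Finset.range ℓ) (fun k => Ψ k ^ 2) g
  have hmass : ∑ x ∈ Finset.range ℓ, ∑ y ∈ Finset.range ℓ, (Ψ x ^ 2 + Ψ y ^ 2) = 2 * ℓ := by
    simp only [Finset.sum_add_distrib, Finset.sum_const, Finset.card_range, nsmul_eq_mul,
      ← Finset.mul_sum, hnorm]
    ring
  have := Finset.sum_le_sum fun x hx => Finset.sum_le_sum fun y hy => hpair x hx y hy
  simp only [hvar, hnorm, hmean, ← Finset.mul_sum, hmass] at this
  linarith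

def extendByZero {ℓ : ℕ} (x : Fin ℓ → ℝ) (k : ℕ) : ℝ :=
  if h : k < ℓ then x ⟨k, h⟩ else 0

@[simp]
lemma extendByZero_val {ℓ : ℕ} (x : Fin ℓ → ℝ) (i : Fin ℓ) : extendByZero x i = x i :=
  dif_pos i.2

lemma extendByZero_nonneg {ℓ : ℕ} {x : Fin ℓ → ℝ} (hx : 0 ≤ x) (k : ℕ) : 0 ≤ extendByZero x k := by
  unfold extendByZero
  split_ifs
  exacts [hx _, le_rfl]

section PathGraph

open SimpleGraph

variable {ℓ : ℕ} {W ψ : Fin ℓ → ℝ} {μ : ℝ}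

lemma exists_lt_potential_le_of_lt (hψ_pos : ∀ i, 0 < ψ i)
    (hψ : hamiltonian (pathGraph ℓ) W *ᵥ ψ = μ • ψ) {x b : Fin ℓ} (hxb : x ≤ b)
    (hψb : ψ b < ψ x) : ∃ p < b, W p ≤ μ := by
  obtain ⟨p, hp, hp_max⟩ := (Finset.Iic b).exists_max_image ψ ⟨x, Finset.mem_Iic.mpr hxb⟩
  have hpb : p < b := lt_of_le_of_ne (Finset.mem_Iic.mp hp) <| by
    rintro rfl; linarith [hp_max x (Finset.mem_Iic.mpr hxb)]
  refine ⟨p, hpb, le_of_forall_adj_le hψ (hψ_pos p) fun k hk => hp_max k ?_⟩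
  have := pathGraph_adj.mp hk
  rw [Fin.lt_def] at hpb
  simp only [Finset.mem_Iic, Fin.le_def]
  omega

lemma exists_gt_potential_le_of_lt (hψ_pos : ∀ i, 0 < ψ i)
    (hψ : hamiltonian (pathGraph ℓ) W *ᵥ ψ = μ • ψ) {b y : Fin ℓ} (hby : b ≤ y)
    (hψb : ψ b < ψ y) : ∃ q > b, W q ≤ μ := by
  obtain ⟨q, hq, hq_max⟩ := (Finset.Ici b).exists_max_image ψ ⟨y, Finset.mem_Ici.mpr hby⟩
  have hbq : b < q := lt_of_le_of_ne (Finset.mem_Ici.mp hq) <| by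
    rintro rfl; linarith [hq_max y (Finset.mem_Ici.mpr hby)]
  refine ⟨q, hbq, le_of_forall_adj_le hψ (hψ_pos q) fun k hk => hq_max k ?_⟩
  have := pathGraph_adj.mp hk
  rw [Fin.lt_def] at hbq
  simp only [Finset.mem_Ici, Fin.le_def]
  omega

/-- The last minimiser of `ψ` on `[x, y]` is an interior point with a strictly larger right
neighbour, so the eigenvalue equation there forces `W` above `μ`. -/
lemma exists_lt_potential_of_lt_min (hψ_pos : ∀ i, 0 < ψ i)
    (hψ : hamiltonian (pathGraph ℓ) W *ᵥ ψ = μ • ψ) {x j y : Fin ℓ} (hxj : x ≤ j) (hjy : j ≤ y)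
    (hj : ψ j < min (ψ x) (ψ y)) : ∃ b, x ≤ b ∧ b ≤ y ∧ ψ b < ψ x ∧ ψ b < ψ y ∧ μ < W b := by
  obtain ⟨b, hb, hb_min, hb_last⟩ :=
    Finset.exists_last_isMinOn ψ (s := Finset.Icc x y) ⟨j, Finset.mem_Icc.mpr ⟨hxj, hjy⟩⟩
  have hbx : ψ b < ψ x := (hb_min j (Finset.mem_Icc.mpr ⟨hxj, hjy⟩)).trans_lt
    (hj.trans_le (min_le_left _ _))
  have hby : ψ b < ψ y := (hb_min j (Finset.mem_Icc.mpr ⟨hxj, hjy⟩)).trans_lt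
    (hj.trans_le (min_le_right _ _))
  obtain ⟨hxb, hby'⟩ := Finset.mem_Icc.mp hb
  have hby_lt : (b : ℕ) < y := Fin.lt_def.mp (lt_of_le_of_ne hby' (by rintro rfl; simp at hby))
  have hxb_lt : (x : ℕ) < b := Fin.lt_def.mp (lt_of_le_of_ne hxb (by rintro rfl; simp at hbx))
  have hIcc : ∀ k, (pathGraph ℓ).Adj b k → k ∈ Finset.Icc x y := fun k hk => by
    have := pathGraph_adj.mp hk
    simp only [Finset.mem_Icc, Fin.le_def]
    omega
  let c : Fin ℓ := ⟨b + 1, by omega⟩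
  have hbc : (pathGraph ℓ).Adj b c := pathGraph_adj.mpr (Or.inl rfl)
  exact ⟨b, hxb, hby', hbx, hby, lt_of_forall_adj_ge hψ (hψ_pos b)
    (fun k hk => hb_min k (hIcc k hk)) hbc
    (hb_last c (hIcc c hbc) (Fin.lt_def.mpr (Nat.lt_succ_self _)))⟩

lemma min_le_of_singleBasin (hW : SingleBasin (pathGraph ℓ) W) (hψ_pos : ∀ i, 0 < ψ i)
    (hψ : hamiltonian (pathGraph ℓ) W *ᵥ ψ = μ • ψ) {x j y : Fin ℓ} (hxj : x ≤ j) (hjy : j ≤ y) :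
    min (ψ x) (ψ y) ≤ ψ j := by
  by_contra! hj
  obtain ⟨b, hxb, hby, hbx, hby', hWb⟩ := exists_lt_potential_of_lt_min hψ_pos hψ hxj hjy hj
  obtain ⟨p, hpb, hWp⟩ := exists_lt_potential_le_of_lt hψ_pos hψ hxb hbx
  obtain ⟨q, hbq, hWq⟩ := exists_gt_potential_le_of_lt hψ_pos hψ hby hby'
  have : W b < W b := (ordConnected_of_preconnected_induce_pathGraph (hW (W b))).out
    (show W p < W b by linarith) (show W q < W b by linarith) ⟨hpb.le, hbq.le⟩
  exact lt_irrefl _ this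

lemma dotProduct_hamiltonian_mulVec_sub_eq_pathDirichletForm (hψ_pos : ∀ i, 0 < ψ i)
    (hψ : hamiltonian (pathGraph ℓ) W *ᵥ ψ = μ • ψ) (f : Fin ℓ → ℝ) :
    f ⬝ᵥ (hamiltonian (pathGraph ℓ) W *ᵥ f) - μ * (f ⬝ᵥ f) =
      pathDirichletForm ℓ (extendByZero ψ) (extendByZero (f / ψ)) := by
  have hfg : f = f / ψ * ψ := funext fun i => (div_mul_cancel₀ _ (hψ_pos i).ne').symm
  rw [hfg, dotProduct_hamiltonian_mulVec_mul_eigenvector hψ, ← hfg, add_sub_cancel_left]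
  have := sum_sum_pathGraph_adj (ℓ := ℓ)
    (fun a b => extendByZero ψ a * extendByZero ψ b *
      (extendByZero (f / ψ) a - extendByZero (f / ψ) b) ^ 2) fun a b => by ring
  simp only [extendByZero_val] at this
  rw [this, pathDirichletForm, mul_div_cancel_left₀ _ two_ne_zero]
  exact Finset.sum_congr rfl fun k _ => by ring

lemma hamiltonian_pathGraph_poincare (hψ_pos : ∀ i, 0 < ψ i)
    (hψ_norm : ψ ⬝ᵥ ψ = 1) (hψ : hamiltonian (pathGraph ℓ) W *ᵥ ψ = μ • ψ)
    (huni : ∀ x j y : Fin ℓ, x ≤ j → j ≤ y → min (ψ x) (ψ y) ≤ ψ j) {f : Fin ℓ → ℝ}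
    (hf : f ⬝ᵥ ψ = 0) :
    f ⬝ᵥ f ≤ (ℓ : ℝ) * ((ℓ : ℝ) - 1) * (f ⬝ᵥ (hamiltonian (pathGraph ℓ) W *ᵥ f) - μ * (f ⬝ᵥ f)) := by
  set Ψ := extendByZero ψ
  set g := extendByZero (f / ψ)
  have hΨ (i : Fin ℓ) : Ψ i = ψ i := extendByZero_val ψ i
  have hΨg (i : Fin ℓ) : Ψ i * g i = f i := by
    simp only [Ψ, g, extendByZero_val, Pi.div_apply]
    exact mul_div_cancel₀ _ (hψ_pos i).ne'
  have hsum (F : ℕ → ℝ) : ∑ i : Fin ℓ, F i = ∑ k ∈ Finset.range ℓ, F k :=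
    Fin.sum_univ_eq_sum_range F ℓ
  have hnorm : ∑ k ∈ Finset.range ℓ, Ψ k ^ 2 = 1 := by
    rw [← hsum, ← hψ_norm]
    exact Finset.sum_congr rfl fun i _ => by rw [hΨ, sq]
  have hmean : ∑ k ∈ Finset.range ℓ, Ψ k ^ 2 * g k = 0 := by
    rw [← hsum, ← hf]
    exact Finset.sum_congr rfl fun i _ => by rw [← hΨg, ← hΨ]; ring
  have hff : f ⬝ᵥ f = ∑ k ∈ Finset.range ℓ, Ψ k ^ 2 * g k ^ 2 := by
    rw [← hsum]
    exact Finset.sum_congr rfl fun i _ => by rw [← hΨg]; ring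
  have huni' : ∀ x j y, x ≤ j → j ≤ y → y < ℓ → min (Ψ x) (Ψ y) ≤ Ψ j := fun x j y hxj hjy hy => by
    simpa [Ψ, extendByZero, show x < ℓ by omega, show j < ℓ by omega, hy] using
      huni ⟨x, by omega⟩ ⟨j, by omega⟩ ⟨y, hy⟩ hxj hjy
  rw [dotProduct_hamiltonian_mulVec_sub_eq_pathDirichletForm hψ_pos hψ f, hff]
  exact sum_sq_mul_sq_le_pathDirichletForm (extendByZero_nonneg fun i => (hψ_pos i).le) huni'
    hnorm hmean

end PathGraph

/-- Poincaré-based gap bound: for a single-basin potential `W` on the path graph on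
`ℓ` vertices, the spectral gap of `H = L + diag W` satisfies `γ_H ≥ 1/(ℓ(ℓ−1))`,
independently of `W`. -/
theorem stmt_16 (ℓ : ℕ) (hℓ : 2 ≤ ℓ) (W : Fin ℓ → ℝ)
    (hbasin : SingleBasin (SimpleGraph.pathGraph ℓ) W) :
    specGap (hamiltonian_isHermitian (SimpleGraph.pathGraph ℓ) W) ≥
      1 / ((ℓ : ℝ) * ((ℓ : ℝ) - 1)) := by
  set hH := hamiltonian_isHermitian (SimpleGraph.pathGraph ℓ) W
  have hcard : 2 ≤ Fintype.card (Fin ℓ) := by simpa using hℓ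
  obtain ⟨ψ, hψ₀, hψ_norm, hψ⟩ :=
    hH.exists_nonneg_unit_eigenvector (by omega) abs_dotProduct_hamiltonian_mulVec_abs_le
  have hψ_pos := pos_of_mulVec_eq_smul (SimpleGraph.pathGraph_preconnected ℓ) hψ₀
    (by rintro rfl; simp at hψ_norm) hψ
  have hscale : 0 < (ℓ : ℝ) * ((ℓ : ℝ) - 1) := by
    have : (2 : ℝ) ≤ ℓ := by exact_mod_cast hℓ
    nlinarith
  refine hH.le_specGap_of_forall_dotProduct_eq_zero hcard ψ fun f hf => ?_
  have := hamiltonian_pathGraph_poincare hψ_pos hψ_norm hψ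
    (fun _ _ _ => min_le_of_singleBasin hbasin hψ_pos hψ) hf
  rw [add_mul, one_div_mul_eq_div, ← le_sub_iff_add_le', div_le_iff₀ hscale]
  linarith
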